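/- In an Archimedean effect algebra, every orthosupplement-sharp element argument holds for multiples of atoms below sharp elements: if a is an atom with ord(a) = n_a, and z is sharp with a ≤ z, then n_a·a ≤ z. -/

import Mathlib

structure EffectAlgebra (α : Type*) where
  oplus : α → α → Option α
  zero : α
  one : α
  zero_ne_one : zero ≠ one
  comm : ∀ x y, oplus x y = oplus y x
  assoc : ∀ x y z, (oplus x y).bind (fun w => oplus w z) = (oplus y z).bind (fun w => oplus x w)
  compl : α → α
  oplus_compl : ∀ x, oplus x (compl x) = some one
  compl_unique : ∀ x y, oplus x y = some one → y = compl x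
  one_max : ∀ x, (oplus one x).isSome → x = zero

/-- The order induced by the partial operation: `x ≤ y` iff `∃ z, x ⊕ z = y`. -/
def EffectAlgebra.le {α : Type*} (E : EffectAlgebra α) (x y : α) : Prop :=
  ∃ z, E.oplus x z = some y

/-- A lattice effect algebra: the lattice order coincides with the induced effect-algebra order. -/
structure LatticeEffectAlgebra (α : Type*) [Lattice α] extends EffectAlgebra α where
  le_iff : ∀ x y : α, x ≤ y ↔ ∃ z, oplus x z = some y

variable {α : Type*}

/-- A sharp element: `w ∧ w' = 0`. -/
def EffectAlgebra.Sharp [Lattice α] (E : EffectAlgebra α) (w : α) : Prop :=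
  w ⊓ E.compl w = E.zero

/-- A central element: `x = (x ∧ z) ∨ (x ∧ z')` for all `x`. -/
def EffectAlgebra.Central [Lattice α] (E : EffectAlgebra α) (z : α) : Prop :=
  ∀ x, x = (x ⊓ z) ⊔ (x ⊓ E.compl z)

/-- Compatibility: `x ↔ y` iff `x ∨ y = x ⊕ (y ⊖ (x ∧ y))`, expressed via the
(unique) difference `d = y ⊖ (x ∧ y)`, i.e. `(x ∧ y) ⊕ d = y` and `x ⊕ d = x ∨ y`. -/
def EffectAlgebra.Compatible [Lattice α] (E : EffectAlgebra α) (x y : α) : Prop :=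
  ∃ d, E.oplus (x ⊓ y) d = some y ∧ E.oplus x d = some (x ⊔ y)

/-- An atom: a minimal nonzero element. -/
def EffectAlgebra.IsAtom' [Lattice α] (E : EffectAlgebra α) (a : α) : Prop :=
  a ≠ E.zero ∧ ∀ b, b ≤ a → b = E.zero ∨ b = a

/-- The `n`-fold sum `n • a` (as a partial element). -/
def EffectAlgebra.nsum (E : EffectAlgebra α) (a : α) : ℕ → Option α
  | 0 => some E.zero
  | n + 1 => (EffectAlgebra.nsum E a n).bind fun w => E.oplus w a

/-- Archimedean: every nonzero element has finite order. -/
def EffectAlgebra.IsArchimedean (E : EffectAlgebra α) : Prop :=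
  ∀ a : α, a ≠ E.zero → ∃ n, EffectAlgebra.nsum E a n = none

/-- Atomic: below every nonzero element there is an atom. -/
def EffectAlgebra.IsAtomic [Lattice α] (E : EffectAlgebra α) : Prop :=
  ∀ x, x ≠ E.zero → ∃ a, EffectAlgebra.IsAtom' E a ∧ a ≤ x

/-- An atom of the center `C(E)`: a minimal nonzero central element. -/
def EffectAlgebra.CenterAtom [Lattice α] (E : EffectAlgebra α) (p : α) : Prop :=
  EffectAlgebra.Central E p ∧ p ≠ E.zero ∧
    ∀ c, EffectAlgebra.Central E c → c ≤ p → c = E.zero ∨ c = p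


/-!
Sharp elements of a lattice effect algebra are principal: if `u, v ≤ z` and `u ⊕ v` exists then
`u ⊕ v ≤ z`. Indeed `v ∧ z' ≤ z ∧ z' = 0`, so `v ⊕ z' = v ∨ z' ≤ u'`; hence `u ⊕ v ⊕ z'` exists,
i.e. `u ⊕ v ≤ z'' = z`. By induction every existing multiple `k • a` of an `a ≤ z` lies below `z`.
-/

namespace EffectAlgebra

variable (E : EffectAlgebra α)

theorem exists_oplus_assoc {x y z u w : α} (hxy : E.oplus x y = some u)
    (huz : E.oplus u z = some w) : ∃ v, E.oplus y z = some v ∧ E.oplus x v = some w := by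
  have h := E.assoc x y z
  rw [hxy, Option.bind_some, huz] at h
  exact Option.bind_eq_some_iff.1 h.symm

theorem exists_oplus_assoc' {x y z v w : α} (hyz : E.oplus y z = some v)
    (hxv : E.oplus x v = some w) : ∃ u, E.oplus x y = some u ∧ E.oplus u z = some w := by
  rw [E.comm] at hyz hxv
  obtain ⟨u, hyx, hzu⟩ := E.exists_oplus_assoc hyz hxv
  exact ⟨u, by rw [E.comm]; exact hyx, by rw [E.comm]; exact hzu⟩

theorem compl_compl (x : α) : E.compl (E.compl x) = x :=
  (E.compl_unique _ _ (by rw [E.comm]; exact E.oplus_compl x)).symm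

theorem compl_one : E.compl E.one = E.zero :=
  E.one_max _ (by rw [E.oplus_compl]; rfl)

theorem oplus_compl_of_oplus {x y w : α} (h : E.oplus x y = some w) :
    E.oplus y (E.compl w) = some (E.compl x) := by
  obtain ⟨v, hyv, hxv⟩ := E.exists_oplus_assoc h (E.oplus_compl w)
  rwa [← E.compl_unique x v hxv]

theorem oplus_zero (x : α) : E.oplus x E.zero = some x := by
  have hone : E.oplus E.one E.zero = some E.one := by
    rw [← E.compl_one]; exact E.oplus_compl E.one
  have hxx : E.oplus (E.compl x) x = some E.one := by rw [E.comm]; exact E.oplus_compl x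
  obtain ⟨v, hxv, hv⟩ := E.exists_oplus_assoc hxx hone
  rwa [E.compl_unique _ _ hv, E.compl_compl] at hxv

theorem oplus_left_cancel {x y z w : α} (hy : E.oplus x y = some w)
    (hz : E.oplus x z = some w) : y = z := by
  have h := E.oplus_compl_of_oplus (E.oplus_compl_of_oplus hy)
  rw [E.oplus_compl_of_oplus (E.oplus_compl_of_oplus hz), Option.some_inj] at h
  simpa only [E.compl_compl] using (congrArg E.compl h).symm

end EffectAlgebra

namespace LatticeEffectAlgebra

variable [Lattice α] (E : LatticeEffectAlgebra α)

theorem zero_le (x : α) : E.zero ≤ x :=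
  (E.le_iff _ _).2 ⟨x, by rw [E.comm]; exact E.oplus_zero x⟩

theorem le_of_oplus_left {x y w : α} (h : E.oplus x y = some w) : x ≤ w :=
  (E.le_iff _ _).2 ⟨y, h⟩

theorem le_of_oplus_right {x y w : α} (h : E.oplus x y = some w) : y ≤ w :=
  E.le_of_oplus_left (by rw [E.comm]; exact h)

theorem le_compl_of_oplus {x y w : α} (h : E.oplus x y = some w) : y ≤ E.compl x :=
  (E.le_iff _ _).2 ⟨E.compl w, E.oplus_compl_of_oplus h⟩

theorem compl_le_compl {x y : α} (h : x ≤ y) : E.compl y ≤ E.compl x := by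
  obtain ⟨c, hc⟩ := (E.le_iff _ _).1 h
  exact E.le_of_oplus_left (by rw [E.comm]; exact E.oplus_compl_of_oplus hc)

theorem exists_oplus_of_le_compl {x y : α} (h : y ≤ E.compl x) : ∃ w, E.oplus x y = some w := by
  obtain ⟨c, hc⟩ := (E.le_iff _ _).1 h
  obtain ⟨w, hxy, -⟩ := E.exists_oplus_assoc' hc (E.oplus_compl x)
  exact ⟨w, hxy⟩

/-- `w ⊖ s ≤ w ⊖ u` whenever `u ≤ s`. -/
theorem le_of_oplus_eq_of_le {u s d x w : α} (hus : u ≤ s) (hs : E.oplus s d = some w)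
    (hu : E.oplus u x = some w) : d ≤ x := by
  obtain ⟨e, he⟩ := (E.le_iff _ _).1 hus
  obtain ⟨v, hed, huv⟩ := E.exists_oplus_assoc he hs
  rw [E.oplus_left_cancel huv hu] at hed
  exact E.le_of_oplus_right hed

theorem oplus_eq_sup_of_inf_eq_zero {x y w : α} (hinf : x ⊓ y = E.zero)
    (h : E.oplus x y = some w) : w = x ⊔ y := by
  obtain ⟨d, hd⟩ := (E.le_iff _ _).1 (sup_le (E.le_of_oplus_left h) (E.le_of_oplus_right h))
  have hdx : d ≤ x := E.le_of_oplus_eq_of_le le_sup_right hd (by rw [E.comm]; exact h)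
  have hdy : d ≤ y := E.le_of_oplus_eq_of_le le_sup_left hd h
  have hd0 : d = E.zero := le_antisymm (hinf ▸ le_inf hdx hdy) (E.zero_le d)
  rw [hd0, E.oplus_zero, Option.some_inj] at hd
  exact hd.symm

end LatticeEffectAlgebra

namespace EffectAlgebra.Sharp

variable [Lattice α] {E : LatticeEffectAlgebra α} {z : α}

theorem oplus_le (hz : E.Sharp z) {u v w : α} (hu : u ≤ z) (hv : v ≤ z)
    (h : E.oplus u v = some w) : w ≤ z := by
  have hvz : v ⊓ E.compl z = E.zero :=
    le_antisymm (hz ▸ inf_le_inf_right _ hv) (E.zero_le _)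
  obtain ⟨s, hs⟩ := E.exists_oplus_of_le_compl (E.compl_le_compl hv)
  have hsu : s ≤ E.compl u := by
    rw [E.oplus_eq_sup_of_inf_eq_zero hvz hs]
    exact sup_le (E.le_compl_of_oplus h) (E.compl_le_compl hu)
  obtain ⟨t, ht⟩ := E.exists_oplus_of_le_compl hsu
  obtain ⟨w', huv, hwz⟩ := E.exists_oplus_assoc' hs ht
  obtain rfl : w = w' := by rwa [h, Option.some_inj] at huv
  rw [E.comm] at hwz
  simpa only [E.compl_compl] using E.le_compl_of_oplus hwz

theorem nsum_le (hz : E.Sharp z) {a : α} (haz : a ≤ z) :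
    ∀ {k : ℕ} {w : α}, E.nsum a k = some w → w ≤ z
  | 0, w, h => by
    rw [EffectAlgebra.nsum, Option.some_inj] at h
    exact h ▸ E.zero_le z
  | k + 1, w, h => by
    obtain ⟨u, hu, huw⟩ := Option.bind_eq_some_iff.1 h
    exact hz.oplus_le (hz.nsum_le haz hu) haz huw

end EffectAlgebra.Sharp

theorem atom_multiple_le_sharp_general {α : Type*} [Lattice α]
    (E : LatticeEffectAlgebra α)
    (a z : α) (hz : E.Sharp z) (haz : a ≤ z)
    (na : ℕ) (hord : E.nsum a na ≠ none ∧ E.nsum a (na + 1) = none) :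
    ∃ w, E.nsum a na = some w ∧ w ≤ z := by
  obtain ⟨w, hw⟩ := Option.ne_none_iff_exists'.1 hord.1
  exact ⟨w, hw, hz.nsum_le haz hw⟩

/-- in an Archimedean lattice effect algebra, if `a` is an atom
with `ord a = nₐ` and `z` is sharp with `a ≤ z`, then `nₐ • a ≤ z`. -/
theorem atom_multiple_le_sharp {α : Type*} [Lattice α]
    (E : LatticeEffectAlgebra α) (hArch : E.IsArchimedean)
    (a z : α) (ha : E.IsAtom' a) (hz : E.Sharp z) (haz : a ≤ z)
    (na : ℕ) (hord : E.nsum a na ≠ none ∧ E.nsum a (na + 1) = none) :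
    ∃ w, E.nsum a na = some w ∧ w ≤ z :=
  atom_multiple_le_sharp_general E a z hz haz na hord
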